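/- arXiv:1411.6863 — 2 statements merged into one kernel-verified Lean document; each statement's English description precedes it below -/
import Mathlib

section
/- Let D be a topological group with identity e and S a subgroup of D. Then the image of π₁(D, e) in π₁(D, S, e) under the natural map is contained in the center of π₁(D, S, e). -/
/-!
With paths extended constantly outside `I`, the representative of `[g]·[h]` is
`t ↦ g(2t) · h(2t - 1)`. Sliding the two time windows past each other,
`(t, s) ↦ g(2t - 1 + s) · ℓ(2t - s)`, is a homotopy that fixes both endpoints (`1` and `a`).
At `s = 0` it is `t ↦ g(2t - 1) · ℓ(2t)`, in which one factor is always `1` since `ℓ` is a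
loop, so the two factors commute and this is the representative of `[ℓ]·[g]`.
-/

open unitInterval

/-- Relative homotopy of paths `(I, ∂I, 0) → (D, S, e)` in a topological group `D`
with subgroup `S`: a homotopy keeping the value at `0` equal to the identity and
the value at `1` inside `S`. -/
def RelHtpy {D : Type*} [TopologicalSpace D] [Group D] [IsTopologicalGroup D]
    (S : Subgroup D) (γ γ' : C(unitInterval, D)) : Prop :=
  ∃ H : C(unitInterval × unitInterval, D),
    (∀ t, H (t, 0) = γ t) ∧ (∀ t, H (t, 1) = γ' t) ∧
    (∀ s, H (0, s) = 1) ∧ (∀ s, (H (1, s)) ∈ S)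

/-- The path `t ↦ a · h(t)` from `a` to `a·b`. -/
def translPath {D : Type*} [TopologicalSpace D] [Group D] [IsTopologicalGroup D]
    (a b : D) (h : Path (1 : D) b) : Path a (a * b) :=
  ⟨⟨fun t => a * h t, by continuity⟩, by simp, by simp⟩

/-- The representative of the product `[g]·[h]` in `π₁(D, S, e)`: first run `g`,
then run `g(1)·h`. -/
noncomputable def mulRep {D : Type*} [TopologicalSpace D] [Group D] [IsTopologicalGroup D]
    {a b : D} (g : Path (1 : D) a) (h : Path (1 : D) b) : Path (1 : D) (a * b) :=
  g.trans (translPath a b h)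

/-- Off its own half of `I`, each factor is stuck at an endpoint: the first at `a`, the second
at `1`. -/
theorem mulRep_apply {D : Type*} [TopologicalSpace D] [Group D] [IsTopologicalGroup D]
    {a b : D} (g : Path (1 : D) a) (h : Path (1 : D) b) (t : I) :
    mulRep g h t = g.extend (2 * t) * h.extend (2 * t - 1) := by
  rw [mulRep, Path.trans_apply]
  split_ifs with ht
  · rw [Path.extend_of_le_zero h (by linarith), mul_one, Path.extend_apply]
  · rw [Path.extend_of_one_le g (by linarith), Path.extend_apply]
    rfl

theorem Path.commute_extend_sub_one {D : Type*} [TopologicalSpace D] [Monoid D] {a : D}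
    (ℓ : Path (1 : D) 1) (g : Path (1 : D) a) (x : ℝ) :
    Commute (ℓ.extend x) (g.extend (x - 1)) := by
  rcases le_or_gt x 1 with hx | hx
  · rw [g.extend_of_le_zero (by linarith)]
    exact Commute.one_right _
  · rw [ℓ.extend_of_one_le hx.le]
    exact Commute.one_left _

noncomputable def slideHtpy {D : Type*} [TopologicalSpace D] [Group D] [IsTopologicalGroup D]
    {a b : D} (g : Path (1 : D) a) (h : Path (1 : D) b) : C(I × I, D) :=
  ⟨fun p => g.extend (2 * p.1 - 1 + p.2) * h.extend (2 * p.1 - p.2), by fun_prop⟩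

section slideHtpy

variable {D : Type*} [TopologicalSpace D] [Group D] [IsTopologicalGroup D]
  {a b : D} (g : Path (1 : D) a) (h : Path (1 : D) b)

theorem slideHtpy_apply_zero_right (t : I) :
    slideHtpy g h (t, 0) = g.extend (2 * t - 1) * h.extend (2 * t) := by
  simp [slideHtpy]

theorem slideHtpy_apply_one_right (t : I) : slideHtpy g h (t, 1) = mulRep g h t := by
  simp [slideHtpy, mulRep_apply]

theorem slideHtpy_apply_zero_left (s : I) : slideHtpy g h (0, s) = 1 := by
  simp only [slideHtpy, ContinuousMap.coe_mk, Set.Icc.coe_zero, mul_zero, zero_sub]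
  rw [g.extend_of_le_zero (by linarith [s.2.2]), h.extend_of_le_zero (by linarith [s.2.1]),
    mul_one]

theorem slideHtpy_apply_one_left (s : I) : slideHtpy g h (1, s) = a * b := by
  simp only [slideHtpy, ContinuousMap.coe_mk, Set.Icc.coe_one, mul_one]
  rw [g.extend_of_one_le (by linarith [s.2.1]), h.extend_of_one_le (by linarith [s.2.2])]

end slideHtpy

/-- Let `D` be a topological group with identity `e` and `S` a
subgroup of `D`. Then the image of `π₁(D, e)` in `π₁(D, S, e)` is contained in
the center of `π₁(D, S, e)`: for every loop `ℓ` at `e` (representing an element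
of the image of `π₁(D, e)`) and every relative path `g`, the representatives of
`[ℓ]·[g]` and `[g]·[ℓ]` are relatively homotopic. -/
theorem stmt_6 {D : Type*} [TopologicalSpace D] [Group D] [IsTopologicalGroup D]
    (S : Subgroup D) (a : D) (ha : a ∈ S)
    (ℓ : Path (1 : D) (1 : D)) (g : Path (1 : D) a) :
    RelHtpy S (mulRep ℓ g).toContinuousMap (mulRep g ℓ).toContinuousMap := by
  refine ⟨slideHtpy g ℓ, fun t => ?_, slideHtpy_apply_one_right g ℓ,
    slideHtpy_apply_zero_left g ℓ, fun s => ?_⟩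
  · rw [slideHtpy_apply_zero_right, Path.coe_toContinuousMap, mulRep_apply]
    exact (ℓ.commute_extend_sub_one g (2 * t)).symm.eq
  · rw [slideHtpy_apply_one_left, mul_one]
    exact ha
end

section
/- Consider homomorphisms j₁ : P₁ → Q and η : Q → ℤ of groups together with boundary maps ∂_C : P₁ → S₁ (an isomorphism), j₀ : S₁ → S, ∂ : Q → S, k : S → ℤ/n satisfying: ∂ ∘ j₁ = j₀ ∘ ∂_C, k ∘ ∂ = (mod n) ∘ η, ker k = im j₀, ker ∂ is generated by central elements L, M with η(L) = n, η(M) = 0, and M = j₁(∂_C⁻¹(σ⁻¹)) viewed via ∂: if η(x) = 0 for x ∈ Q and ker k = im j₀ and η ∘ j₁ = 0, then x ∈ im j₁. (Exactness of the middle column: ker η = im j₁.) -/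
/-- Reduction mod `n` as a homomorphism `ℤ → ZMod n` (written multiplicatively). -/
def modn (n : ℕ) : Multiplicative ℤ →* Multiplicative (ZMod n) :=
  AddMonoidHom.toMultiplicative (Int.castAddHom (ZMod n))

/-!
An element `x` with `η x = 1` satisfies `k (d x) = 1`, so `d x` lies in `im j₀ = d (im j₁)`:
thus `x ∈ im j₁ ⊔ ker d`. Since `im j₁ ≤ ker η`, Dedekind's modular law reduces the claim to
`ker η ⊓ ker d ≤ im j₁`, and an element `L ^ a * M ^ b` of `ker d` is killed by `η` only
if `n * a = 0`, i.e. `a = 0`, leaving `M ^ b ∈ im j₁`.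
-/

theorem Subgroup.le_of_le_sup_of_inf_le {G : Type*} [Group G] {A H N : Subgroup G} [N.Normal]
    (hHA : H ≤ A) (hA : A ≤ H ⊔ N) (hAN : A ⊓ N ≤ H) : A ≤ H := by
  intro x hx
  obtain ⟨y, hy, z, hz, rfl⟩ := Subgroup.mem_sup_of_normal_right.1 (hA hx)
  have hzA : z ∈ A := by simpa using A.mul_mem (A.inv_mem (hHA hy)) hx
  exact H.mul_mem hy (hAN ⟨hzA, hz⟩)

theorem MonoidHom.range_comp_of_surjective {G N P : Type*} [Group G] [Group N] [Group P]
    (g : N →* P) {f : G →* N} (hf : Function.Surjective f) : (g.comp f).range = g.range := by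
  rw [range_comp, range_eq_top.2 hf, ← range_eq_map]

theorem MonoidHom.ker_le_range_sup_ker_of_comp_eq {P Q S A B : Type*} [Group P] [Group Q]
    [Group S] [Group A] [Group B] {j : P →* Q} {d : Q →* S} {k : S →* B} {η : Q →* A}
    (f : A →* B) (hkd : k.comp d = f.comp η) (hk : k.ker ≤ (d.comp j).range) :
    η.ker ≤ j.range ⊔ d.ker := by
  intro x hx
  rw [← Subgroup.comap_map_eq, ← range_comp]
  apply hk
  change k (d x) = 1
  rw [← comp_apply, hkd, comp_apply, hx, map_one]

theorem MonoidHom.ker_inf_le_of_forall_eq_zpow_mul_zpow {Q : Type*} [Group Q]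
    {H K : Subgroup Q} (η : Q →* Multiplicative ℤ) {L M : Q} {n : ℤ} (hn : n ≠ 0)
    (hK : ∀ x ∈ K, ∃ a b : ℤ, x = L ^ a * M ^ b) (hηL : η L = Multiplicative.ofAdd n)
    (hηM : η M = 1) (hM : M ∈ H) : η.ker ⊓ K ≤ H := by
  rintro x ⟨hx, hxK⟩
  obtain ⟨a, b, rfl⟩ := hK x hxK
  have ha : a = 0 := by
    have hna : η (L ^ a * M ^ b) = Multiplicative.ofAdd (a * n) := by
      rw [map_mul, map_zpow, map_zpow, hηL, hηM, one_zpow, mul_one, ← ofAdd_zsmul, smul_eq_mul]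
    rw [hx] at hna
    simpa [hn] using congrArg Multiplicative.toAdd hna.symm
  simpa [ha] using H.zpow_mem hM b

theorem stmt_17_general {P₁ Q S₁ S : Type*} [Group P₁] [Group Q] [Group S₁] [Group S]
    (n : ℕ) (hn : 2 ≤ n)
    (dC : P₁ →* S₁) (hdC : Function.Bijective dC)
    (j₁ : P₁ →* Q) (j₀ : S₁ →* S) (d : Q →* S)
    (k : S →* Multiplicative (ZMod n)) (η : Q →* Multiplicative ℤ)
    (L M : Q)
    (hkerd : ∀ x : Q, d x = 1 ↔ ∃ a b : ℤ, x = L ^ a * M ^ b)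
    (hηL : η L = Multiplicative.ofAdd (n : ℤ)) (hηM : η M = 1)
    (hsq : d.comp j₁ = j₀.comp dC)
    (hkd : k.comp d = (modn n).comp η)
    (hηj : η.comp j₁ = 1)
    (hj0k : j₀.range = k.ker)
    (hMrange : M ∈ j₁.range) :
    η.ker = j₁.range := by
  have hrange : j₁.range ≤ η.ker := (MonoidHom.range_le_ker_iff j₁ η).2 hηj
  have hk : k.ker ≤ (d.comp j₁).range := by
    rw [hsq, MonoidHom.range_comp_of_surjective j₀ hdC.2, hj0k]
  refine le_antisymm (Subgroup.le_of_le_sup_of_inf_le (N := d.ker) hrange ?_ ?_) hrange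
  · exact MonoidHom.ker_le_range_sup_ker_of_comp_eq (modn n) hkd hk
  · exact η.ker_inf_le_of_forall_eq_zpow_mul_zpow (by omega) (fun x hx => (hkerd x).1 hx)
      hηL hηM hMrange

/-- exactness of the middle column: Given groups `P₁, Q, S₁, S`,
`n ≥ 2`, an isomorphism `∂_C : P₁ ≅ S₁`, homomorphisms `j₁ : P₁ → Q`,
`j₀ : S₁ → S`, a surjective `∂ : Q → S` whose kernel is generated by central
elements `L, M`, `k : S → ZMod n` and `η : Q → ℤ`, satisfying
`∂ ∘ j₁ = j₀ ∘ ∂_C`, `k ∘ ∂ = (mod n) ∘ η`, `η ∘ j₁ = 0`, `η(L) = n`,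
`η(M) = 0`, `im j₀ = ker k`, and `M ∈ im j₁`; then `ker η = im j₁`. -/
theorem stmt_17 {P₁ Q S₁ S : Type*} [Group P₁] [Group Q] [Group S₁] [Group S]
    (n : ℕ) (hn : 2 ≤ n)
    (dC : P₁ →* S₁) (hdC : Function.Bijective dC)
    (j₁ : P₁ →* Q) (j₀ : S₁ →* S) (d : Q →* S) (hd : Function.Surjective d)
    (k : S →* Multiplicative (ZMod n)) (η : Q →* Multiplicative ℤ)
    (L M : Q) (hL : L ∈ Subgroup.center Q) (hM : M ∈ Subgroup.center Q)
    (hkerd : ∀ x : Q, d x = 1 ↔ ∃ a b : ℤ, x = L ^ a * M ^ b)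
    (hηL : η L = Multiplicative.ofAdd (n : ℤ)) (hηM : η M = 1)
    (hsq : d.comp j₁ = j₀.comp dC)
    (hkd : k.comp d = (modn n).comp η)
    (hηj : η.comp j₁ = 1)
    (hj0k : j₀.range = k.ker)
    (hMrange : M ∈ j₁.range) :
    η.ker = j₁.range :=
  stmt_17_general n hn dC hdC j₁ j₀ d k η L M hkerd hηL hηM hsq hkd hηj hj0k hMrange
end
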